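/- For integer n ≥ 1 and nonnegative integers m, k, the coefficient h(k) = (k!/Γ(n+k)) ∫_0^∞ x^{n-1} e^{-2x} (L_m^{(n-1)}(x))² L_k^{(n-1)}(x) dx equals (2^{-n}/Γ(n)) Σ_{l=0}^{2m} 2^{-l} σ_l (Γ(n+l)/l!) ₂F₁(-k, n+l; n; 1/2), where σ_l = (-1)^l Σ_{i=0}^l binomial(l,i) binomial(n+m-1, m-l+i) binomial(n+m-1, m-i). -/

import Mathlib

open scoped BigOperators
open MeasureTheory Real

noncomputable def genBinom (a : ℝ) (k : ℕ) : ℝ :=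
  (∏ i ∈ Finset.range k, (a - i)) / (Nat.factorial k)

noncomputable def lag (j : ℕ) (α : ℝ) (x : ℝ) : ℝ :=
  ∑ i ∈ Finset.range (j + 1),
    (-1 : ℝ) ^ i * genBinom ((j : ℝ) + α) (j - i) * x ^ i / (Nat.factorial i)

noncomputable def poch (a : ℝ) (i : ℕ) : ℝ := ∏ t ∈ Finset.range i, (a + t)

/-- Terminating Gauss hypergeometric sum `₂F₁(-k, b; c; x)`. -/
noncomputable def hyp2F1 (k : ℕ) (b c x : ℝ) : ℝ :=
  ∑ i ∈ Finset.range (k + 1),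
    poch (-(k : ℝ)) i * poch b i / (poch c i * (Nat.factorial i)) * x ^ i

def chooseZ (a : ℕ) (k : ℤ) : ℕ :=
  if k < 0 then 0 else a.choose k.toNat

noncomputable def sigma' (n m l : ℕ) : ℝ :=
  (-1 : ℝ) ^ l *
    ∑ i ∈ Finset.range (l + 1),
      (Nat.choose l i) * (chooseZ (n + m - 1) ((m : ℤ) - l + i)) * (chooseZ (n + m - 1) ((m : ℤ) - i))

/-! With `A = n - 1` a natural number, `lag j A` has the coefficients `(-1)^i C(A+j, j-i) / i!`,
so the Cauchy product of `lag m A` with itself has coefficients `σ_l / l!` (Feldheim). The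
coefficient `h(k)` thus reduces to the Laplace transforms
`∫ x^(A+l) e^(-2x) L_k = (A+l)! / 2^(A+l+1) · C(A+k, k) · ₂F₁(-k, A+1+l; A+1; 1/2)`,
which follow by integrating `L_k` monomial by monomial with `∫ x^a e^(-2x) = a! / 2^(a+1)` and
matching the terms with those of the hypergeometric sum. -/

open Finset Polynomial
open scoped Nat

lemma prod_range_natCast_sub (N k : ℕ) :
    ∏ i ∈ range k, ((N : ℝ) - i) = N.descFactorial k := by
  rw [← descPochhammer_eval_eq_prod_range, descPochhammer_eval_eq_descFactorial]

lemma genBinom_natCast (N k : ℕ) : genBinom N k = N.choose k := by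
  rw [genBinom, prod_range_natCast_sub, Nat.descFactorial_eq_factorial_mul_choose]
  push_cast
  field_simp

lemma poch_eq_eval_ascPochhammer (a : ℝ) (j : ℕ) : poch a j = (ascPochhammer ℝ j).eval a := by
  induction j with
  | zero => simp [poch]
  | succ j ih => rw [poch, prod_range_succ, ← poch, ih, ascPochhammer_succ_eval]

lemma poch_neg_natCast (k j : ℕ) : poch (-k) j = (-1) ^ j * k.descFactorial j := by
  rw [poch_eq_eval_ascPochhammer, ascPochhammer_eval_neg_eq_descPochhammer,
    descPochhammer_eval_eq_descFactorial]

lemma poch_natCast_add_one (A j : ℕ) : poch (A + 1) j = (A + j)! / A ! := by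
  rw [eq_div_iff (by positivity), poch_eq_eval_ascPochhammer, ← Nat.cast_add_one,
    ← Nat.cast_ascFactorial, mul_comm]
  exact_mod_cast Nat.factorial_mul_ascFactorial A j

lemma Real.Gamma_natCast_add_one_add (A l : ℕ) : Gamma (A + 1 + l) = (A + l)! := by
  rw [add_right_comm, ← Nat.cast_add, Real.Gamma_nat_eq_factorial]

section CauchyProduct

variable {R : Type*} [CommRing R] {a b : ℕ → R} {M N : ℕ}

lemma coeff_sum_range_C_mul_X_pow (ha : ∀ i, M < i → a i = 0) (i : ℕ) :
    (∑ j ∈ range (M + 1), C (a j) * X ^ j).coeff i = a i := by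
  simp only [finsetSum_coeff, coeff_C_mul_X_pow, sum_ite_eq, mem_range]
  split_ifs with h
  · rfl
  · exact (ha i (by omega)).symm

lemma natDegree_sum_range_C_mul_X_pow_le (a : ℕ → R) (M : ℕ) :
    (∑ j ∈ range (M + 1), C (a j) * X ^ j).natDegree ≤ M :=
  natDegree_sum_le_of_forall_le _ _ fun _ hj =>
    (natDegree_C_mul_X_pow_le _ _).trans (Nat.lt_succ_iff.mp (mem_range.mp hj))

lemma sum_range_mul_sum_range_eq_sum_range_convolution (ha : ∀ i, M < i → a i = 0)
    (hb : ∀ i, N < i → b i = 0) (x : R) :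
    (∑ i ∈ range (M + 1), a i * x ^ i) * ∑ j ∈ range (N + 1), b j * x ^ j =
      ∑ l ∈ range (M + N + 1), (∑ i ∈ range (l + 1), a i * b (l - i)) * x ^ l := by
  set p := ∑ i ∈ range (M + 1), C (a i) * X ^ i
  set q := ∑ j ∈ range (N + 1), C (b j) * X ^ j
  have hpq : (p * q).natDegree < M + N + 1 := Nat.lt_succ_of_le <|
    natDegree_mul_le.trans (add_le_add (natDegree_sum_range_C_mul_X_pow_le a M)
      (natDegree_sum_range_C_mul_X_pow_le b N))
  have hp : p.eval x = ∑ i ∈ range (M + 1), a i * x ^ i := by simp [p, eval_finsetSum]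
  have hq : q.eval x = ∑ j ∈ range (N + 1), b j * x ^ j := by simp [q, eval_finsetSum]
  rw [← hp, ← hq, ← eval_mul, eval_eq_sum_range' hpq]
  refine sum_congr rfl fun l _ => ?_
  rw [coeff_mul, Finset.Nat.sum_antidiagonal_eq_sum_range_succ_mk]
  simp only [p, q, coeff_sum_range_C_mul_X_pow ha, coeff_sum_range_C_mul_X_pow hb]

end CauchyProduct

noncomputable def lagCoeff (A j i : ℕ) : ℝ :=
  (-1) ^ i * chooseZ (A + j) ((j : ℤ) - i) / i !

lemma lagCoeff_of_lt {A j i : ℕ} (h : j < i) : lagCoeff A j i = 0 := by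
  simp [lagCoeff, chooseZ, show (j : ℤ) - i < 0 by omega]

lemma lagCoeff_of_le {A j i : ℕ} (h : i ≤ j) :
    lagCoeff A j i = (-1) ^ i * (A + j).choose (j - i) / i ! := by
  rw [lagCoeff, chooseZ, if_neg (by omega), show ((j : ℤ) - i).toNat = j - i by omega]

lemma lag_natCast_eq_sum (A j : ℕ) (x : ℝ) :
    lag j A x = ∑ i ∈ range (j + 1), lagCoeff A j i * x ^ i := by
  refine sum_congr rfl fun i hi => ?_
  rw [lagCoeff_of_le (Nat.lt_succ_iff.mp (mem_range.mp hi)), ← Nat.cast_add, add_comm,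
    genBinom_natCast]
  ring

lemma sum_range_lagCoeff_mul_lagCoeff (A m l : ℕ) :
    ∑ i ∈ range (l + 1), lagCoeff A m i * lagCoeff A m (l - i) = sigma' (A + 1) m l / l ! := by
  rw [sigma', show A + 1 + m - 1 = A + m by omega, Nat.cast_sum, mul_sum, sum_div]
  refine sum_congr rfl fun i hi => ?_
  have hil : i ≤ l := Nat.lt_succ_iff.mp (mem_range.mp hi)
  have hsign : (-1 : ℝ) ^ i * (-1) ^ (l - i) = (-1) ^ l := by
    rw [← pow_add, Nat.add_sub_cancel' hil]
  rw [lagCoeff, lagCoeff, Nat.cast_mul, Nat.cast_mul, Nat.cast_choose ℝ hil,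
    show (m : ℤ) - ↑(l - i) = m - l + i by omega, ← hsign]
  field_simp

theorem lag_sq_eq_sum (A m : ℕ) (x : ℝ) :
    lag m A x ^ 2 = ∑ l ∈ range (2 * m + 1), sigma' (A + 1) m l / l ! * x ^ l := by
  rw [sq, lag_natCast_eq_sum, sum_range_mul_sum_range_eq_sum_range_convolution
    (fun _ => lagCoeff_of_lt) (fun _ => lagCoeff_of_lt), two_mul]
  simp only [sum_range_lagCoeff_mul_lagCoeff]

section LaplaceTransform

variable {r : ℝ}

lemma integrableOn_pow_mul_exp_neg_mul (hr : 0 < r) (a : ℕ) :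
    IntegrableOn (fun x : ℝ => x ^ a * exp (-r * x)) (Set.Ioi 0) := by
  refine (integrableOn_rpow_mul_exp_neg_mul_rpow (s := a) (p := 1)
    (by linarith [a.cast_nonneg (α := ℝ)]) one_pos hr).congr_fun
    (fun x _ => ?_) measurableSet_Ioi
  simp only [rpow_natCast, rpow_one]

lemma integral_pow_mul_exp_neg_mul (hr : 0 < r) (a : ℕ) :
    ∫ x in Set.Ioi 0, x ^ a * exp (-r * x) = a ! / r ^ (a + 1) := by
  have h := integral_rpow_mul_exp_neg_mul_Ioi (a := a + 1) (by positivity) hr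
  rw [add_sub_cancel_right, Real.Gamma_nat_eq_factorial, ← Nat.cast_add_one, rpow_natCast] at h
  simp only [rpow_natCast] at h
  simp only [neg_mul, h, one_div_pow, one_div_mul_eq_div]

variable (s : Finset ℕ) (c : ℕ → ℝ) (a : ℕ)

lemma pow_mul_exp_neg_mul_mul_sum (x : ℝ) :
    x ^ a * exp (-r * x) * ∑ j ∈ s, c j * x ^ j =
      ∑ j ∈ s, c j * (x ^ (a + j) * exp (-r * x)) := by
  rw [mul_sum]
  exact sum_congr rfl fun j _ => by ring

lemma integrableOn_pow_mul_exp_neg_mul_mul_sum (hr : 0 < r) :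
    IntegrableOn (fun x : ℝ => x ^ a * exp (-r * x) * ∑ j ∈ s, c j * x ^ j) (Set.Ioi 0) := by
  simp only [pow_mul_exp_neg_mul_mul_sum]
  exact integrable_finsetSum _ fun j _ => (integrableOn_pow_mul_exp_neg_mul hr _).const_mul _

lemma integral_pow_mul_exp_neg_mul_mul_sum (hr : 0 < r) :
    ∫ x in Set.Ioi 0, x ^ a * exp (-r * x) * ∑ j ∈ s, c j * x ^ j =
      ∑ j ∈ s, c j * ((a + j)! / r ^ (a + j + 1)) := by
  simp only [pow_mul_exp_neg_mul_mul_sum]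
  rw [integral_finsetSum _ fun j _ => (integrableOn_pow_mul_exp_neg_mul hr _).const_mul _]
  simp only [integral_const_mul, integral_pow_mul_exp_neg_mul hr]

end LaplaceTransform

lemma lagCoeff_mul_factorial_div_two_pow (A k l j : ℕ) (hj : j ≤ k) :
    lagCoeff A k j * ((A + l + j)! / 2 ^ (A + l + j + 1)) =
      (A + l)! / 2 ^ (A + l + 1) * (A + k).choose k *
        (poch (-k) j * poch (A + 1 + l) j / (poch (A + 1) j * j !) * (1 / 2) ^ j) := by
  have hdesc : (k.descFactorial j : ℝ) = k ! / (k - j)! := by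
    rw [eq_div_iff (by positivity), mul_comm]
    exact_mod_cast Nat.factorial_mul_descFactorial hj
  rw [lagCoeff_of_le hj, poch_neg_natCast, hdesc, add_right_comm (A : ℝ), ← Nat.cast_add,
    poch_natCast_add_one, poch_natCast_add_one, Nat.cast_choose ℝ (by omega : k - j ≤ A + k),
    Nat.cast_choose ℝ (by omega : k ≤ A + k), show A + k - (k - j) = A + j by omega,
    Nat.add_sub_cancel, one_div_pow]
  field_simp
  ring

theorem integral_pow_mul_exp_neg_two_mul_mul_lag (A k l : ℕ) :
    ∫ x in Set.Ioi 0, x ^ (A + l) * exp (-2 * x) * lag k A x =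
      (A + l)! / 2 ^ (A + l + 1) * (A + k).choose k * hyp2F1 k (A + 1 + l) (A + 1) (1 / 2) := by
  simp only [lag_natCast_eq_sum]
  rw [integral_pow_mul_exp_neg_mul_mul_sum _ _ _ two_pos, hyp2F1, mul_sum]
  exact sum_congr rfl fun j hj =>
    lagCoeff_mul_factorial_div_two_pow A k l j (Nat.lt_succ_iff.mp (mem_range.mp hj))

theorem lagFourierCoeff_eq_hyp_sum (n : ℕ) (hn : 1 ≤ n) (m k : ℕ) :
    (Nat.factorial k / Real.Gamma ((n : ℝ) + k)) *
        ∫ x in Set.Ioi (0 : ℝ),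
          x ^ ((n : ℝ) - 1) * Real.exp (-2 * x) * (lag m ((n : ℝ) - 1) x) ^ 2 *
            lag k ((n : ℝ) - 1) x
      = (2 : ℝ) ^ (-(n : ℝ)) / Real.Gamma n *
          ∑ l ∈ Finset.range (2 * m + 1),
            (2 : ℝ) ^ (-(l : ℝ)) * sigma' n m l * (Real.Gamma ((n : ℝ) + l) / (Nat.factorial l)) *
              hyp2F1 k ((n : ℝ) + l) (n : ℝ) (1 / 2) := by
  obtain ⟨A, rfl⟩ : ∃ A, n = A + 1 := ⟨n - 1, by omega⟩
  have hα : ((A + 1 : ℕ) : ℝ) - 1 = A := by push_cast; ring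
  have integrand (x : ℝ) :
      x ^ (((A + 1 : ℕ) : ℝ) - 1) * exp (-2 * x) * lag m (((A + 1 : ℕ) : ℝ) - 1) x ^ 2 *
          lag k (((A + 1 : ℕ) : ℝ) - 1) x =
        ∑ l ∈ range (2 * m + 1),
          sigma' (A + 1) m l / l ! * (x ^ (A + l) * exp (-2 * x) * lag k A x) := by
    rw [hα, rpow_natCast, lag_sq_eq_sum, mul_sum, sum_mul]
    exact sum_congr rfl fun l _ => by ring
  have integrable (l : ℕ) :
      IntegrableOn (fun x => x ^ (A + l) * exp (-2 * x) * lag k A x) (Set.Ioi 0) := by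
    simpa only [lag_natCast_eq_sum] using
      integrableOn_pow_mul_exp_neg_mul_mul_sum _ _ (A + l) two_pos
  simp only [integrand]
  rw [integral_finsetSum _ fun l _ => (integrable l).const_mul _, mul_sum, mul_sum]
  refine sum_congr rfl fun l _ => ?_
  rw [integral_const_mul, integral_pow_mul_exp_neg_two_mul_mul_lag]
  push_cast
  rw [Real.Gamma_natCast_add_one_add, Real.Gamma_natCast_add_one_add, Real.Gamma_nat_eq_factorial,
    Nat.cast_choose ℝ (Nat.le_add_left k A), Nat.add_sub_cancel, rpow_neg zero_le_two,
    rpow_neg zero_le_two, rpow_add two_pos, rpow_natCast, rpow_natCast, rpow_one]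
  field_simp
  ring
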